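/- Let S be a finite nonempty set and ℙ a nonempty finite collection of nonempty compact convex subsets of Δ(S). Suppose P ∩ P' ≠ ∅ for all P, P' ∈ ℙ. Then the relation φ ≽ ψ iff max_{P∈ℙ}min_{p∈P}E_p[φ−ψ] ≥ 0 satisfies constant-bound transitivity: for all φ ∈ ℝ^S and a, b ∈ ℝ, if a·1 ≽ φ and φ ≽ b·1 then a ≥ b. -/
import Mathlib


open scoped BigOperators

noncomputable def Ep {S : Type*} [Fintype S] (p φ : S → ℝ) : ℝ := ∑ s, p s * φ s

def probSimplex (S : Type*) [Fintype S] : Set (S → ℝ) :=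
  {p | (∀ s, 0 ≤ p s) ∧ ∑ s, p s = 1}

noncomputable def Fmm {S : Type*} [Fintype S] (PP : Finset (Set (S → ℝ))) (φ : S → ℝ) : ℝ :=
  sSup ((fun P => sInf ((fun p => Ep p φ) '' P)) '' (PP : Set (Set (S → ℝ))))

noncomputable def Gmm {S : Type*} [Fintype S] (PP : Finset (Set (S → ℝ))) (φ : S → ℝ) : ℝ :=
  sInf ((fun P => sSup ((fun p => Ep p φ) '' P)) '' (PP : Set (Set (S → ℝ))))

def GoodColl {S : Type*} [Fintype S] (PP : Finset (Set (S → ℝ))) : Prop :=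
  PP.Nonempty ∧ ∀ P ∈ PP, P.Nonempty ∧ IsCompact P ∧ Convex ℝ P ∧ P ⊆ probSimplex S

lemma Ep_continuous {S : Type*} [Fintype S] (φ : S → ℝ) :
    Continuous fun p : S → ℝ => Ep p φ := by
  unfold Ep
  exact continuous_finset_sum _ fun s _ => (continuous_apply s).mul continuous_const

lemma Fmm_witness {S : Type*} [Fintype S] (PP : Finset (Set (S → ℝ)))
    (hPP : GoodColl PP) (ψ : S → ℝ) (h : 0 ≤ Fmm PP ψ) :
    ∃ P ∈ PP, ∀ p ∈ P, 0 ≤ Ep p ψ := by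
  obtain ⟨hne, hprop⟩ := hPP
  set A : Set ℝ := (fun P => sInf ((fun p => Ep p ψ) '' P)) '' (PP : Set (Set (S → ℝ)))
  have hAne : A.Nonempty := (Set.image_nonempty).2 (by exact_mod_cast hne)
  have hAfin : A.Finite := (PP.finite_toSet.image _)
  have hmem : sSup A ∈ A := hAne.csSup_mem hAfin
  obtain ⟨P, hP, hPval⟩ := hmem
  refine ⟨P, hP, fun p hp => ?_⟩
  obtain ⟨hPne, hPcomp, _, _⟩ := hprop P hP
  have hbdd : BddBelow ((fun p => Ep p ψ) '' P) :=
    (hPcomp.image (Ep_continuous ψ)).bddBelow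
  have hle : sInf ((fun p => Ep p ψ) '' P) ≤ Ep p ψ :=
    csInf_le hbdd ⟨p, hp, rfl⟩
  have : 0 ≤ sInf ((fun p => Ep p ψ) '' P) := by
    have := hPval; simp only [] at this
    rw [this]; exact h
  linarith

theorem stmt9 {S : Type*} [Fintype S] [Nonempty S]
    (PP : Finset (Set (S → ℝ))) (hPP : GoodColl PP)
    (hint : ∀ P ∈ PP, ∀ P' ∈ PP, (P ∩ P').Nonempty) :
    ∀ (φ : S → ℝ) (a b : ℝ),
      0 ≤ Fmm PP ((fun _ => a) - φ) → 0 ≤ Fmm PP (φ - fun _ => b) → b ≤ a := by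
  intro φ a b ha hb
  obtain ⟨P, hP, hPa⟩ := Fmm_witness PP hPP _ ha
  obtain ⟨P', hP', hPb⟩ := Fmm_witness PP hPP _ hb
  obtain ⟨p, hpP, hpP'⟩ := hint P hP P' hP'
  have hsimp : p ∈ probSimplex S := (hPP.2 P hP).2.2.2 hpP
  have hsum : ∑ s, p s = 1 := hsimp.2
  have h1 := hPa p hpP
  have h2 := hPb p hpP'
  have e1 : Ep p ((fun _ => a) - φ) = a - Ep p φ := by
    unfold Ep
    simp only [Pi.sub_apply, mul_sub]
    rw [Finset.sum_sub_distrib, ← Finset.sum_mul, hsum, one_mul]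
  have e2 : Ep p (φ - fun _ => b) = Ep p φ - b := by
    unfold Ep
    simp only [Pi.sub_apply, mul_sub]
    rw [Finset.sum_sub_distrib, ← Finset.sum_mul, hsum, one_mul]
  rw [e1] at h1
  rw [e2] at h2
  linarith
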